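/- arXiv:2111.00341 — 4 statements merged into one kernel-verified Lean document; each statement's English description precedes it below -/
import Mathlib

section
/- Let W be an m×n real matrix with m ≤ n such that every square submatrix of W formed from rows and columns whose intersection pattern is nonzero is invertible (generic matrix). Then W has rank m if and only if for every subset C of the rows, the submatrix of W on those rows has at least |C| nonzero columns. -/
/-!
If the rows are independent, the rows indexed by `C` live in the coordinate space of the
columns they meet, so there are at least `|C|` such columns. Conversely, Hall's marriage
theorem turns the condition into an injective choice of a nonzero entry in every row; the
square submatrix on these columns has a nonzero generalized diagonal, so it is invertible by
genericity, and its rows, hence those of `W`, are independent.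
-/

open Matrix Finset Function

namespace Matrix

variable {ι κ K : Type*} [Field K]

def nonzeroCols [Fintype κ] [DecidableEq K] (A : Matrix ι κ K) (C : Finset ι) : Finset κ :=
  univ.filter fun j => ∃ i ∈ C, A i j ≠ 0

theorem rank_eq_card_iff_linearIndependent_row [Fintype ι] [Fintype κ] (A : Matrix ι κ K) :
    A.rank = Fintype.card ι ↔ LinearIndependent K A.row := by
  refine ⟨fun h => ?_, LinearIndependent.rank_matrix⟩
  rw [linearIndependent_iff_card_eq_finrank_span, Set.finrank, ← rank_eq_finrank_span_row, h]

theorem extend_row_submatrix_nonzeroCols [Fintype κ] [DecidableEq K] (A : Matrix ι κ K)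
    (C : Finset ι) (i : C) :
    extend ((↑) : A.nonzeroCols C → κ) (fun j => A i j) 0 = A i := by
  funext j
  by_cases hj : j ∈ A.nonzeroCols C
  · exact Subtype.val_injective.extend_apply _ _ ⟨j, hj⟩
  · rw [extend_apply' _ _ _ fun ⟨s, hs⟩ => hj (hs ▸ s.2), Pi.zero_apply]
    by_contra hne
    exact hj (mem_filter.mpr ⟨mem_univ j, i, i.2, Ne.symm hne⟩)

theorem card_le_card_nonzeroCols_of_linearIndependent [Fintype κ] [DecidableEq K]
    {A : Matrix ι κ K} (hA : LinearIndependent K A.row) (C : Finset ι) :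
    #C ≤ #(A.nonzeroCols C) := by
  let B := A.submatrix ((↑) : C → ι) ((↑) : A.nonzeroCols C → κ)
  have hB : LinearIndependent K B.row := by
    refine LinearIndependent.of_comp (ExtendByZero.linearMap K ((↑) : A.nonzeroCols C → κ)) ?_
    convert hA.comp _ Subtype.val_injective using 1
    funext i
    exact A.extend_row_submatrix_nonzeroCols C i
  simpa [hB.rank_matrix] using B.rank_le_card_width

theorem exists_injective_ne_zero_of_card_le_card_nonzeroCols [Fintype κ] [DecidableEq κ]
    [DecidableEq K] {A : Matrix ι κ K} (hA : ∀ C : Finset ι, #C ≤ #(A.nonzeroCols C)) :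
    ∃ f : ι → κ, Injective f ∧ ∀ i, A i (f i) ≠ 0 := by
  have hbiUnion (C : Finset ι) : C.biUnion (fun i => {j | A i j ≠ 0}) = A.nonzeroCols C := by
    ext j
    simp [nonzeroCols]
  obtain ⟨f, hf, hne⟩ := (all_card_le_biUnion_card_iff_exists_injective _).mp
    fun C => (hbiUnion C).symm ▸ hA C
  exact ⟨f, hf, fun i => (mem_filter.mp (hne i)).2⟩

theorem linearIndependent_row_of_det_submatrix_ne_zero [Fintype ι] [DecidableEq ι]
    {A : Matrix ι κ K} {f : ι → κ} (hA : (A.submatrix id f).det ≠ 0) :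
    LinearIndependent K A.row :=
  (linearIndependent_rows_of_det_ne_zero hA).of_comp (LinearMap.funLeft K K f)

end Matrix

theorem stmt_0_general (m n : ℕ) (W : Matrix (Fin m) (Fin n) ℝ)
    (hgen : ∀ (k : ℕ) (r : Fin k → Fin m) (c : Fin k → Fin n),
      Function.Injective r → Function.Injective c →
      (∀ i, ∃ j, W (r i) (c j) ≠ 0) → (∀ j, ∃ i, W (r i) (c j) ≠ 0) →
      (W.submatrix r c).det ≠ 0) :
    W.rank = m ↔
      ∀ C : Finset (Fin m),
        C.card ≤ (Finset.univ.filter fun j : Fin n => ∃ i ∈ C, W i j ≠ 0).card := by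
  have hrank := W.rank_eq_card_iff_linearIndependent_row
  rw [Fintype.card_fin] at hrank
  -- The statement decides `∃ i ∈ C` through the instance for `Fin m`, not the one for `Finset`.
  have hcols (C : Finset (Fin m)) :
      W.nonzeroCols C = univ.filter fun j => ∃ i ∈ C, W i j ≠ 0 := by
    unfold nonzeroCols
    congr
  simp_rw [hrank, ← hcols]
  refine ⟨card_le_card_nonzeroCols_of_linearIndependent, fun hHall => ?_⟩
  obtain ⟨f, hf, hne⟩ := exists_injective_ne_zero_of_card_le_card_nonzeroCols hHall
  exact linearIndependent_row_of_det_submatrix_ne_zero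
    (hgen m id f injective_id hf (fun i => ⟨i, hne i⟩) (fun j => ⟨j, hne j⟩))

/-- Edmonds' rank lemma: a generic m×n matrix (every square submatrix with no
zero row and no zero column is invertible) has full row rank iff every set of
rows `C` has at least `|C|` nonzero columns. -/
theorem stmt_0 (m n : ℕ) (hmn : m ≤ n) (W : Matrix (Fin m) (Fin n) ℝ)
    (hgen : ∀ (k : ℕ) (r : Fin k → Fin m) (c : Fin k → Fin n),
      Function.Injective r → Function.Injective c →
      (∀ i, ∃ j, W (r i) (c j) ≠ 0) → (∀ j, ∃ i, W (r i) (c j) ≠ 0) →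
      (W.submatrix r c).det ≠ 0) :
    W.rank = m ↔
      ∀ C : Finset (Fin m),
        C.card ≤ (Finset.univ.filter fun j : Fin n => ∃ i ∈ C, W i j ≠ 0).card :=
  stmt_0_general m n W hgen
end

section
/- Let B be a p×m real matrix and suppose its rows B_1,…,B_p, viewed as vectors in ℝ^m, are such that for every subset J of rows, |J| ≤ |{columns with a nonzero entry in some row of J}|, and every square submatrix of B without zero rows or columns is invertible. Then the rows of B are linearly independent. -/
/-!
By Hall's theorem the marriage condition gives an injective choice of a column `f i` in the
support of each row `i`. The square submatrix on the columns `f` has a nonzero diagonal, so no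
zero rows or columns, and genericity makes it invertible; its rows are the rows of `B` seen
through the coordinate restriction along `f`, hence the rows of `B` are independent.
-/

theorem Matrix.exists_injective_ne_zero_of_hall {ι α R : Type*} [Fintype α] [Zero R]
    (B : Matrix ι α R) [∀ J : Finset ι, DecidablePred fun j => ∃ i ∈ J, B i j ≠ 0]
    (hall : ∀ J : Finset ι, J.card ≤ (Finset.univ.filter fun j => ∃ i ∈ J, B i j ≠ 0).card) :
    ∃ f : ι → α, Function.Injective f ∧ ∀ i, B i (f i) ≠ 0 := by
  classical
  let support : ι → Finset α := fun i => Finset.univ.filter fun j => B i j ≠ 0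
  have hall' : ∀ J : Finset ι, J.card ≤ (J.biUnion support).card := fun J => by
    convert hall J using 2
    ext j
    simp [support]
  obtain ⟨f, hf, hsupp⟩ := (Finset.all_card_le_biUnion_card_iff_exists_injective support).mp hall'
  exact ⟨f, hf, fun i => by simpa [support] using hsupp i⟩

theorem Matrix.linearIndependent_rows_of_det_submatrix_ne_zero {n α K : Type*} [Fintype n]
    [DecidableEq n] [Field K] (B : Matrix n α K) {f : n → α}
    (hdet : (B.submatrix id f).det ≠ 0) :
    LinearIndependent K (fun i => B i) := by
  have hsub : LinearIndependent K (fun i => (B.submatrix id f) i) :=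
    linearIndependent_rows_iff_isUnit.mpr ((isUnit_iff_isUnit_det _).mpr hdet.isUnit)
  exact LinearIndependent.of_comp (LinearMap.funLeft K K f) hsub

/-- Marriage condition on the supports of the rows plus genericity implies the
rows of `B` are linearly independent. -/
theorem stmt_10 (p m : ℕ) (B : Matrix (Fin p) (Fin m) ℝ)
    (hmarriage : ∀ J : Finset (Fin p),
      J.card ≤ (Finset.univ.filter fun j : Fin m => ∃ i ∈ J, B i j ≠ 0).card)
    (hgen : ∀ (k : ℕ) (r : Fin k → Fin p) (c : Fin k → Fin m),
      Function.Injective r → Function.Injective c →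
      (∀ i, ∃ j, B (r i) (c j) ≠ 0) → (∀ j, ∃ i, B (r i) (c j) ≠ 0) →
      (B.submatrix r c).det ≠ 0) :
    LinearIndependent ℝ (fun i : Fin p => B i) := by
  obtain ⟨f, hf, hdiag⟩ := B.exists_injective_ne_zero_of_hall hmarriage
  have hdet : (B.submatrix id f).det ≠ 0 :=
    hgen p id f Function.injective_id hf (fun i => ⟨i, hdiag i⟩) (fun j => ⟨j, hdiag j⟩)
  exact B.linearIndependent_rows_of_det_submatrix_ne_zero hdet
end

section
/- Let x_1 = b_{11}s_1 + b_{12}s_2, x_2 = b_{21}s_1 + b_{23}s_3 with all b's nonzero, and suppose x_3 is generated as x_3 = a_{31}x_1 + a_{32}x_2 + b_{32}s_2 where s_1,s_2,s_3 are linearly independent vectors. If b_{32} ≠ 0 and b_{12} ≠ 0, then there exist distinct coefficient triples (a'_{31}, a'_{32}, s') with s' in the span of {s_1} (namely a'_{31} = a_{31} + b_{32}/b_{12}, a'_{32} = a_{32}, s' = −(b_{11}b_{32}/b_{12}) s_1) such that a'_{31}x_1 + a'_{32}x_2 + s' = x_3. Hence the decomposition of x_3 into causal part plus exogenous part supported outside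 the unique components is not unique. -/
/-- Necessity of the unique components condition (Example 3): if the unique
component `s₂` of `x₁` is exogenously connected to `x₃`, the decomposition of
`x₃` into causal plus exogenous part is not unique. -/
theorem stmt_12 {V : Type*} [AddCommGroup V] [Module ℝ V]
    (s₁ s₂ s₃ : V) (hind : LinearIndependent ℝ ![s₁, s₂, s₃])
    (b11 b12 b21 b23 b32 a31 a32 : ℝ)
    (hb11 : b11 ≠ 0) (hb12 : b12 ≠ 0) (hb21 : b21 ≠ 0) (hb23 : b23 ≠ 0)
    (hb32 : b32 ≠ 0)
    (x₁ x₂ x₃ : V)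
    (hx1 : x₁ = b11 • s₁ + b12 • s₂)
    (hx2 : x₂ = b21 • s₁ + b23 • s₃)
    (hx3 : x₃ = a31 • x₁ + a32 • x₂ + b32 • s₂) :
    (a31 + b32 / b12) • x₁ + a32 • x₂ + (-(b11 * b32 / b12)) • s₁ = x₃ ∧
      a31 + b32 / b12 ≠ a31 ∧
      (-(b11 * b32 / b12)) • s₁ ∈ Submodule.span ℝ {s₁} := by
  refine ⟨?_, ?_, Submodule.smul_mem _ _ (Submodule.mem_span_singleton_self s₁)⟩
  · subst hx1 hx2 hx3
    have h1 : b32 / b12 * b12 = b32 := div_mul_cancel₀ _ hb12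
    have h2 : b11 * b32 / b12 = b32 / b12 * b11 := by ring
    match_scalars <;> field_simp <;> ring
  · intro h
    apply hb32
    have := div_eq_zero_iff.mp (by linarith : b32 / b12 = 0)
    tauto
end

section
/- In a linear P-SCM X = A X + B S with A strictly lower triangular, where B has the block form B = [A_{ol} | I] (each observed variable has a distinct source), and under the faithfulness assumption that the support of W = (I−A)⁻¹B satisfies: if there is a directed path from x_i to x_j in the graph of A then supp(W_i) ⊆ supp(W_j) and no cancellation occurs — then for each k, the set {i : supp(W_i) ⊊ supp(W_k)} equals the set of ancestors of x_k in the DAG of A. -/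
/-!
Since `A` is strictly lower triangular, `(I - A)⁻¹` is lower unitriangular, and the column of
`W` belonging to the distinct source of `x_i` is column `i` of `(I - A)⁻¹`. Hence the own source
of `x_i` lies in `supp(W_i)`, and it lies in `supp(W_k)` only if `(I - A)⁻¹ k i ≠ 0`, which by
genericity makes `x_i` an ancestor of `x_k` when `i ≠ k`. Conversely, for an ancestor `x_i` of
`x_k` faithfulness gives `supp(W_i) ⊆ supp(W_k)`, and the inclusion is strict because `i < k`
keeps the own source of `x_k` out of `supp(W_i)`.
-/

open Matrix

namespace Matrix

variable {n R : Type*}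

theorem mul_fromCols_one_apply_inr {l m : Type*} [Semiring R] [Fintype n] [DecidableEq n]
    (N : Matrix l n R) (X : Matrix n m R) (k : l) (i : n) :
    (N * fromCols X 1) k (Sum.inr i) = N k i := by
  simp [mul_fromCols]

variable [LinearOrder n]

theorem IsLowerTriangular.mul_apply_self [Fintype n] [NonUnitalNonAssocSemiring R]
    {M N : Matrix n n R} (hM : M.IsLowerTriangular) (hN : N.IsLowerTriangular) (i : n) :
    (M * N) i i = M i i * N i i := by
  refine (mul_apply ..).trans <| Finset.sum_eq_single i (fun j _ hji => ?_) (by simp)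
  rcases hji.lt_or_gt with h | h
  · rw [hN h, mul_zero]
  · rw [hM h, zero_mul]

section Unitriangular

variable [Fintype n] [DecidableEq n] [CommRing R] {M : Matrix n n R}

theorem IsLowerTriangular.inv (hM : M.IsLowerTriangular) : M⁻¹.IsLowerTriangular := by
  by_cases hdet : IsUnit M.det
  · have := M.invertibleOfIsUnitDet hdet
    exact blockTriangular_inv_of_blockTriangular hM
  · rw [nonsing_inv_apply_not_isUnit M hdet]
    exact blockTriangular_zero

theorem IsLowerTriangular.det_eq_one (hM : M.IsLowerTriangular) (hdiag : ∀ i, M i i = 1) :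
    M.det = 1 := by
  simp [det_of_isLowerTriangular M hM, hdiag]

theorem IsLowerTriangular.inv_apply_self (hM : M.IsLowerTriangular) (hdiag : ∀ i, M i i = 1)
    (i : n) : M⁻¹ i i = 1 := by
  have hunit : IsUnit M.det := by rw [hM.det_eq_one hdiag]; exact isUnit_one
  simpa [hdiag, hM.mul_apply_self hM.inv] using congr_fun₂ (mul_nonsing_inv M hunit) i i

end Unitriangular

section StrictlyLower

variable {A : Matrix n n R}

theorem isLowerTriangular_one_sub [DecidableEq n] [Ring R] (hA : ∀ i j, i ≤ j → A i j = 0) :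
    (1 - A).IsLowerTriangular := fun i j (hij : i < j) => by
  simp [hij.ne, hA i j hij.le]

theorem one_sub_apply_self [DecidableEq n] [Ring R] (hA : ∀ i j, i ≤ j → A i j = 0) (i : n) :
    (1 - A) i i = 1 := by
  simp [hA i i le_rfl]

theorem lt_of_transGen_ne_zero [Zero R] (hA : ∀ i j, i ≤ j → A i j = 0) {i k : n}
    (h : Relation.TransGen (fun a b => A b a ≠ 0) i k) : i < k :=
  Relation.transGen_minimal (r' := (· < ·))
    (fun a b (hab : A b a ≠ 0) => lt_of_not_ge fun hba => hab (hA b a hba)) i k h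

end StrictlyLower

end Matrix

/-- In a linear DS-P-SCM (each observed variable has a distinct source,
`B = [A_ol | I]`), under faithfulness (ancestors' supports are contained in
descendants' supports) and genericity (a nonzero entry of `(I-A)⁻¹` off the
diagonal witnesses a directed path), the possible parent set
`{i : supp(Wᵢ) ⊊ supp(W_k)}` is exactly the ancestor set of `x_k`. -/
theorem stmt_15 (p m : ℕ) (A : Matrix (Fin p) (Fin p) ℝ)
    (hA : ∀ i j : Fin p, i ≤ j → A i j = 0)
    (Aol : Matrix (Fin p) (Fin m) ℝ)
    (B : Matrix (Fin p) (Fin m ⊕ Fin p) ℝ)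
    (hB : B = Matrix.fromCols Aol (1 : Matrix (Fin p) (Fin p) ℝ))
    (W : Matrix (Fin p) (Fin m ⊕ Fin p) ℝ) (hW : W = (1 - A)⁻¹ * B)
    (hfaith : ∀ i j : Fin p,
      Relation.TransGen (fun a b : Fin p => A b a ≠ 0) i j →
      {c : Fin m ⊕ Fin p | W i c ≠ 0} ⊆ {c | W j c ≠ 0})
    (hgen : ∀ i k : Fin p, i ≠ k → (1 - A)⁻¹ k i ≠ 0 →
      Relation.TransGen (fun a b : Fin p => A b a ≠ 0) i k) :
    ∀ k : Fin p,
      {i : Fin p | {c : Fin m ⊕ Fin p | W i c ≠ 0} ⊂ {c | W k c ≠ 0}} =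
        {i : Fin p | Relation.TransGen (fun a b : Fin p => A b a ≠ 0) i k} := by
  have hlower := isLowerTriangular_one_sub hA
  have hsource : ∀ k i, W k (Sum.inr i) = (1 - A)⁻¹ k i := by
    subst hW hB
    exact mul_fromCols_one_apply_inr _ _
  have hown : ∀ i, W i (Sum.inr i) ≠ 0 := fun i => by
    rw [hsource, hlower.inv_apply_self (one_sub_apply_self hA)]
    exact one_ne_zero
  intro k
  ext i
  simp only [Set.mem_ofPred_eq]
  constructor
  · intro hsub
    have hik : i ≠ k := by
      rintro rfl
      exact ne_of_ssubset hsub rfl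
    exact hgen i k hik (hsource k i ▸ hsub.subset (hown i))
  · intro hpath
    refine (hfaith i k hpath).ssubset_of_not_superset fun hki => hki (hown k) ?_
    rw [hsource]
    exact hlower.inv (lt_of_transGen_ne_zero hA hpath)
end
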